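/- arXiv:2301.09426 — 4 statements merged into one kernel-verified Lean document; each statement's English description precedes it below -/
import Mathlib

section
/- Let R be a commutative ring, M an R-module, S a finite subset of Spec R, and m_1, …, m_t ∈ M. Suppose that for every 𝔭 ∈ S the elements m_1(𝔭), …, m_t(𝔭) do not generate M(𝔭) as a κ(𝔭)-vector space. Then there exists m_{t+1} ∈ M such that for every 𝔭 ∈ S, dim_{κ(𝔭)} Span_{κ(𝔭)}{m_1(𝔭), …, m_{t+1}(𝔭)} = dim_{κ(𝔭)} Span_{κ(𝔭)}{m_1(𝔭), …, m_t(𝔭)} + 1. -/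
set_option maxHeartbeats 1000000


open TensorProduct

/-- The residue field `κ(𝔭)` of a commutative ring `R` at a prime ideal `𝔭`. -/
noncomputable abbrev kappa (R : Type*) [CommRing R] (p : PrimeSpectrum R) : Type _ :=
  IsLocalRing.ResidueField (Localization.AtPrime p.asIdeal)

section Aux

variable {R : Type*} [CommRing R] {M : Type*} [AddCommGroup M] [Module R M]

lemma kappa_algebraMap_eq_zero_iff (p : PrimeSpectrum R) (a : R) :
    algebraMap R (kappa R p) a = 0 ↔ a ∈ p.asIdeal := by
  rw [IsScalarTower.algebraMap_apply R (Localization.AtPrime p.asIdeal) (kappa R p) a,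
    IsLocalRing.ResidueField.algebraMap_eq, IsLocalRing.residue_eq_zero_iff,
    IsLocalization.AtPrime.to_map_mem_maximal_iff _ p.asIdeal]

/-- Avoidance of a family of submodules indexed by finitely many primes. -/
lemma avoid_submodules (S : Finset (PrimeSpectrum R))
    (K : PrimeSpectrum R → Submodule R M)
    (hne : ∀ p ∈ S, K p ≠ ⊤)
    (hsm : ∀ p ∈ S, ∀ a ∈ p.asIdeal, ∀ x : M, a • x ∈ K p)
    (hsat : ∀ p ∈ S, ∀ r ∉ p.asIdeal, ∀ x : M, r • x ∈ K p → x ∈ K p) :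
    ∃ m : M, ∀ p ∈ S, m ∉ K p := by
  classical
  induction S using Finset.strongInduction with
  | _ S ih =>
  rcases S.eq_empty_or_nonempty with rfl | hS
  · exact ⟨0, by simp⟩
  obtain ⟨p0, hp0S, hp0min⟩ := S.exists_minimal hS
  have hsub : S.erase p0 ⊂ S := Finset.erase_ssubset hp0S
  obtain ⟨m, hm⟩ := ih (S.erase p0) hsub
    (fun p hp => hne p (Finset.mem_of_mem_erase hp))
    (fun p hp => hsm p (Finset.mem_of_mem_erase hp))
    (fun p hp => hsat p (Finset.mem_of_mem_erase hp))
  obtain ⟨m0, hm0⟩ : ∃ x : M, x ∉ K p0 := by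
    by_contra hc
    push_neg at hc
    exact hne p0 hp0S (Submodule.eq_top_iff'.mpr hc)
  by_cases hmK : m ∈ K p0
  · -- pick a ∈ all other primes but not in p0
    have hnle : ¬ ((S.erase p0).inf PrimeSpectrum.asIdeal ≤ p0.asIdeal) := by
      intro hle
      obtain ⟨q, hq, hle'⟩ := (Ideal.IsPrime.inf_le' p0.isPrime).mp hle
      have hqne : q ≠ p0 := Finset.ne_of_mem_erase hq
      have hne' : q.asIdeal ≠ p0.asIdeal := fun hh => hqne (PrimeSpectrum.ext hh)
      have : q < p0 := (PrimeSpectrum.asIdeal_lt_asIdeal q p0).mp (lt_of_le_of_ne hle' hne')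
      exact lt_irrefl _ (lt_of_lt_of_le this (hp0min (Finset.mem_of_mem_erase hq) this.le))
    obtain ⟨a, haI, hap0⟩ := SetLike.not_le_iff_exists.mp hnle
    refine ⟨m + a • m0, ?_⟩
    intro p hp
    rcases eq_or_ne p p0 with rfl | hpne
    · intro hmem
      have h1 : a • m0 ∈ K p := by
        have := (K p).sub_mem hmem hmK
        simpa using this
      exact hm0 (hsat p hp a hap0 m0 h1)
    · have hp' : p ∈ S.erase p0 := Finset.mem_erase.mpr ⟨hpne, hp⟩
      intro hmem
      have ha : a ∈ p.asIdeal := (Finset.inf_le hp' : _ ≤ p.asIdeal) haI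
      have h2 : a • m0 ∈ K p := hsm p hp a ha m0
      have : m ∈ K p := by
        have := (K p).sub_mem hmem h2
        simpa using this
      exact hm p hp' this
  · refine ⟨m, ?_⟩
    intro p hp
    rcases eq_or_ne p p0 with rfl | hpne
    · exact hmK
    · exact hm p (Finset.mem_erase.mpr ⟨hpne, hp⟩)

end Aux

/-- **Lemma (swapping in new generators at finitely many primes).**
If `m₁(𝔭), …, m_t(𝔭)` fail to generate `M(𝔭) = κ(𝔭) ⊗_R M` for every `𝔭` in a finite
set `S` of primes, then there is `m' ∈ M` whose image increases the dimension of the span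
at every `𝔭 ∈ S` by exactly one. -/
theorem stmt0 (R : Type*) [CommRing R] (M : Type*) [AddCommGroup M] [Module R M]
    (S : Finset (PrimeSpectrum R)) (t : ℕ) (m : Fin t → M)
    (h : ∀ p ∈ S, Submodule.span (kappa R p)
      (Set.range fun i : Fin t => (1 : kappa R p) ⊗ₜ[R] m i) ≠ ⊤) :
    ∃ m' : M, ∀ p ∈ S,
      Module.finrank (kappa R p) (Submodule.span (kappa R p)
        (insert ((1 : kappa R p) ⊗ₜ[R] m')
          (Set.range fun i : Fin t => (1 : kappa R p) ⊗ₜ[R] m i))) =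
      Module.finrank (kappa R p) (Submodule.span (kappa R p)
        (Set.range fun i : Fin t => (1 : kappa R p) ⊗ₜ[R] m i)) + 1 := by
  classical
  -- The span at `p`, as a `κ(p)`-submodule.
  set N : ∀ p : PrimeSpectrum R, Submodule (kappa R p) (kappa R p ⊗[R] M) :=
    fun p => Submodule.span (kappa R p)
      (Set.range fun i : Fin t => (1 : kappa R p) ⊗ₜ[R] m i) with hN
  -- Preimage in M.
  set K : PrimeSpectrum R → Submodule R M := fun p =>
    (Submodule.restrictScalars R (N p)).comap
      ((TensorProduct.mk R (kappa R p) M) 1) with hK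
  have hKmem : ∀ (p : PrimeSpectrum R) (x : M),
      x ∈ K p ↔ (1 : kappa R p) ⊗ₜ[R] x ∈ N p := fun p x => Iff.rfl
  have hsmul : ∀ (p : PrimeSpectrum R) (c : kappa R p) (x : M),
      c ⊗ₜ[R] x = c • ((1 : kappa R p) ⊗ₜ[R] x) := by
    intro p c x
    rw [TensorProduct.smul_tmul', smul_eq_mul, mul_one]
  have hne : ∀ p ∈ S, K p ≠ ⊤ := by
    intro p hp hKt
    apply h p hp
    rw [Submodule.eq_top_iff']
    intro z
    have hz : z ∈ Submodule.span R {u : kappa R p ⊗[R] M | ∃ c x, c ⊗ₜ[R] x = u} := by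
      rw [TensorProduct.span_tmul_eq_top]; trivial
    have hle : Submodule.span R {u : kappa R p ⊗[R] M | ∃ c x, c ⊗ₜ[R] x = u}
        ≤ Submodule.restrictScalars R (N p) := by
      rw [Submodule.span_le]
      rintro u ⟨c, x, rfl⟩
      have hx : (1 : kappa R p) ⊗ₜ[R] x ∈ N p := by
        have : x ∈ K p := hKt ▸ Submodule.mem_top
        exact (hKmem p x).mp this
      rw [hsmul p c x]
      exact (N p).smul_mem c hx
    exact hle hz
  have hsm : ∀ p ∈ S, ∀ a ∈ p.asIdeal, ∀ x : M, a • x ∈ K p := by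
    intro p _ a ha x
    rw [hKmem]
    have : (1 : kappa R p) ⊗ₜ[R] (a • x) = algebraMap R (kappa R p) a • ((1 : kappa R p) ⊗ₜ[R] x) := by
      rw [TensorProduct.tmul_smul, algebraMap_smul]
    rw [this, (kappa_algebraMap_eq_zero_iff p a).mpr ha, zero_smul]
    exact (N p).zero_mem
  have hsat : ∀ p ∈ S, ∀ r ∉ p.asIdeal, ∀ x : M, r • x ∈ K p → x ∈ K p := by
    intro p _ r hr x hx
    rw [hKmem] at hx ⊢
    have hr0 : algebraMap R (kappa R p) r ≠ 0 :=
      fun h0 => hr ((kappa_algebraMap_eq_zero_iff p r).mp h0)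
    have heq : (1 : kappa R p) ⊗ₜ[R] (r • x) = algebraMap R (kappa R p) r • ((1 : kappa R p) ⊗ₜ[R] x) := by
      rw [TensorProduct.tmul_smul, ← algebraMap_smul (kappa R p) r]
    rw [heq] at hx
    have := (N p).smul_mem (algebraMap R (kappa R p) r)⁻¹ hx
    rwa [inv_smul_smul₀ hr0] at this
  obtain ⟨m', hm'⟩ := avoid_submodules S K hne hsm hsat
  refine ⟨m', ?_⟩
  intro p hp
  have hnotin : (1 : kappa R p) ⊗ₜ[R] m' ∉ N p := fun hmem => hm' p hp ((hKmem p m').mpr hmem)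
  -- dimension count
  set x : kappa R p ⊗[R] M := (1 : kappa R p) ⊗ₜ[R] m'
  set s : Set (kappa R p ⊗[R] M) := Set.range fun i : Fin t => (1 : kappa R p) ⊗ₜ[R] m i
  have hxne : x ≠ 0 := fun h0 => hnotin (h0 ▸ (N p).zero_mem)
  have hfin1 : FiniteDimensional (kappa R p) (Submodule.span (kappa R p) s) :=
    FiniteDimensional.span_of_finite _ (Set.finite_range _)
  have hfin2 : FiniteDimensional (kappa R p) (Submodule.span (kappa R p) {x}) :=
    FiniteDimensional.span_of_finite _ (Set.finite_singleton _)
  have hsp : Submodule.span (kappa R p) (insert x s)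
      = Submodule.span (kappa R p) s ⊔ Submodule.span (kappa R p) {x} := by
    rw [← Submodule.span_union, Set.union_comm, ← Set.insert_eq]
  have hinf : Submodule.span (kappa R p) s ⊓ Submodule.span (kappa R p) {x} = ⊥ := by
    rw [eq_bot_iff]
    rintro z ⟨hz1, hz2⟩
    obtain ⟨c, rfl⟩ := Submodule.mem_span_singleton.mp hz2
    rcases eq_or_ne c 0 with rfl | hc
    · simp
    · exfalso
      apply hnotin
      have := (Submodule.span (kappa R p) s).smul_mem c⁻¹ hz1
      rwa [inv_smul_smul₀ hc] at this
  have key := Submodule.finrank_sup_add_finrank_inf_eq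
    (Submodule.span (kappa R p) s) (Submodule.span (kappa R p) {x})
  rw [hinf, finrank_bot, add_zero, finrank_span_singleton hxne] at key
  rw [hsp]
  exact key
end

section
/- For every integer m ≥ 1 there exist r ∈ ℕ and a sequence of pairs of distinct indices (i_1, j_1), …, (i_r, j_r) ∈ {1, …, m}² such that for every commutative ring R and every matrix g ∈ SL_m(R), there exist finitely many elements s_1, …, s_t ∈ R generating the unit ideal of R with the following property: for each k ∈ {1, …, t} there exist a_1, …, a_r in the localization R_{s_k} = R[1/s_k] such that the image of g in SL_m(R_{s_k}) equals e_{i_1 j_1}(a_1) ⋯ e_{i_r j_r}(a_r). -/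
set_option linter.unusedSectionVars false
set_option maxHeartbeats 1000000
/-- The elementary matrix `e_{ij}(a) ∈ SL_m(A)`: ones on the diagonal, `a` in the
`(i,j)`-entry (`i ≠ j`) and zero elsewhere. -/
def elemMatrix {m : ℕ} (A : Type*) [CommRing A] (i j : Fin m) (hij : i ≠ j) (a : A) :
    Matrix.SpecialLinearGroup (Fin m) A :=
  ⟨Matrix.transvection i j a, Matrix.det_transvection_of_ne i j hij a⟩



set_option linter.unusedSectionVars false
set_option maxHeartbeats 1000000

namespace Stmt5Aux

open Matrix Matrix.TransvectionStruct Sum Unit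

section maps

variable {n : Type*} [DecidableEq n] [Fintype n] {R S : Type*} [CommRing R] [CommRing S]
  (φ : R →+* S)

/-- Map a transvection structure along a ring hom. -/
def tmap (t : TransvectionStruct n R) : TransvectionStruct n S :=
  ⟨t.i, t.j, t.hij, φ t.c⟩

lemma toMatrix_tmap (t : TransvectionStruct n R) :
    (tmap φ t).toMatrix = t.toMatrix.map φ := by
  rcases t with ⟨i, j, hij, c⟩
  ext a b
  simp [tmap, toMatrix, transvection, Matrix.map_apply, Matrix.add_apply, Matrix.one_apply,
    Matrix.single, apply_ite φ]
  split_ifs with h <;> simp [h]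

lemma prod_tmap (L : List (TransvectionStruct n R)) :
    ((L.map (tmap φ)).map toMatrix).prod = ((L.map toMatrix).prod).map φ := by
  have : ((L.map toMatrix).prod).map φ = φ.mapMatrix ((L.map toMatrix).prod) := rfl
  rw [this, map_list_prod φ.mapMatrix, List.map_map, List.map_map]
  have hf : (toMatrix ∘ tmap φ) = ((⇑φ.mapMatrix : Matrix n n R → Matrix n n S) ∘ toMatrix) :=
    funext fun t => toMatrix_tmap φ t
  rw [hf]

lemma det_prod_toMatrix (L : List (TransvectionStruct n R)) :
    ((L.map toMatrix).prod).det = 1 := by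
  induction L with
  | nil => simp
  | cons t L IH => simp [IH]

end maps

end Stmt5Aux



namespace Stmt5Aux

open Matrix Matrix.TransvectionStruct

variable {m : ℕ}

/-- The type of pairs of distinct indices. -/
abbrev PairT (m : ℕ) := {p : Fin m × Fin m // p.1 ≠ p.2}

/-- A transvection structure as an element of `SL`. -/
def toSL (A : Type) [CommRing A] (t : TransvectionStruct (Fin m) A) :
    Matrix.SpecialLinearGroup (Fin m) A :=
  ⟨t.toMatrix, t.det⟩

lemma elemMatrix_zero (A : Type) [CommRing A] (i j : Fin m) (hij : i ≠ j) :
    elemMatrix A i j hij 0 = 1 := by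
  apply Subtype.ext
  simp [elemMatrix, transvection_zero]

lemma block_real (A : Type) [CommRing A] (Q : List (PairT m)) (hQ : Q.Nodup)
    (ts : TransvectionStruct (Fin m) A)
    (hmem : (⟨(ts.i, ts.j), ts.hij⟩ : PairT m) ∈ Q) :
    (Q.map fun p => elemMatrix A p.1.1 p.1.2 p.2
      (if p = (⟨(ts.i, ts.j), ts.hij⟩ : PairT m) then ts.c else 0)).prod = toSL A ts := by
  induction Q with
  | nil => simp at hmem
  | cons p Q' IH =>
    rw [List.nodup_cons] at hQ
    rcases hQ with ⟨hp, hQ'⟩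
    by_cases h : p = (⟨(ts.i, ts.j), ts.hij⟩ : PairT m)
    · subst h
      have htail : (Q'.map fun p => elemMatrix A p.1.1 p.1.2 p.2
          (if p = (⟨(ts.i, ts.j), ts.hij⟩ : PairT m) then ts.c else 0)).prod = 1 := by
        apply List.prod_eq_one
        intro x hx
        rw [List.mem_map] at hx
        obtain ⟨q, hqmem, rfl⟩ := hx
        rw [if_neg (by rintro rfl; exact hp hqmem)]
        exact elemMatrix_zero A _ _ _
      rw [List.map_cons, List.prod_cons, htail, mul_one, if_pos rfl]
      apply Subtype.ext
      rfl
    · rw [List.map_cons, List.prod_cons, if_neg h, elemMatrix_zero, one_mul]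
      rcases List.mem_cons.mp hmem with h' | h'
      · exact absurd h'.symm h
      · exact IH hQ' h'

lemma realize (m N : ℕ) :
    ∃ (r : ℕ) (q : Fin r → PairT m),
      ∀ (A : Type) [CommRing A] (L : List (TransvectionStruct (Fin m) A)), L.length ≤ N →
        ∃ a : Fin r → A,
          (List.ofFn fun k => elemMatrix A (q k).1.1 (q k).1.2 (q k).2 (a k)).prod =
            (L.map (toSL A)).prod := by
  induction N with
  | zero =>
    refine ⟨0, Fin.elim0, ?_⟩
    intro A _ L hL
    rw [Nat.le_zero, List.length_eq_zero_iff] at hL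
    subst hL
    exact ⟨Fin.elim0, by simp⟩
  | succ N IH =>
    obtain ⟨r, q, hq⟩ := IH
    set QL : List (PairT m) := (Finset.univ : Finset (PairT m)).toList with hQL
    refine ⟨QL.length + r, Fin.append (fun k : Fin QL.length => QL.get k) q, ?_⟩
    intro A _ L hL
    have key : ∀ (w : Fin QL.length → A) (a' : Fin r → A),
        (List.ofFn fun k : Fin (QL.length + r) =>
          elemMatrix A ((Fin.append (fun k : Fin QL.length => QL.get k) q) k).1.1
            ((Fin.append (fun k : Fin QL.length => QL.get k) q) k).1.2
            ((Fin.append (fun k : Fin QL.length => QL.get k) q) k).2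
            ((Fin.append w a') k)).prod =
        (List.ofFn fun k : Fin QL.length =>
          elemMatrix A (QL.get k).1.1 (QL.get k).1.2 (QL.get k).2 (w k)).prod *
        (List.ofFn fun k : Fin r =>
          elemMatrix A (q k).1.1 (q k).1.2 (q k).2 (a' k)).prod := by
      intro w a'
      rw [List.ofFn_add, List.prod_append]
      congr 1
      · refine congrArg List.prod (congrArg List.ofFn (funext fun k => ?_))
        simp only [Fin.append_left']
      · refine congrArg List.prod (congrArg List.ofFn (funext fun k => ?_))
        simp only [Fin.append_right]
    rcases L with _ | ⟨ts, L'⟩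
    · obtain ⟨a', ha'⟩ := hq A [] (by simp)
      refine ⟨Fin.append (fun _ => 0) a', ?_⟩
      rw [key]
      have h1 : (List.ofFn fun k : Fin QL.length =>
          elemMatrix A (QL.get k).1.1 (QL.get k).1.2 (QL.get k).2 (0 : A)).prod = 1 := by
        apply List.prod_eq_one
        intro x hx
        rw [List.mem_ofFn] at hx
        obtain ⟨k, rfl⟩ := hx
        exact elemMatrix_zero A _ _ _
      rw [h1, one_mul, ha']
    · obtain ⟨a', ha'⟩ := hq A L' (by simpa using Nat.succ_le_succ_iff.mp hL)
      refine ⟨Fin.append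
        (fun k : Fin QL.length =>
          if QL.get k = (⟨(ts.i, ts.j), ts.hij⟩ : PairT m) then ts.c else 0) a', ?_⟩
      rw [key, ha']
      have hhead : (List.ofFn fun k : Fin QL.length =>
          elemMatrix A (QL.get k).1.1 (QL.get k).1.2 (QL.get k).2
            (if QL.get k = (⟨(ts.i, ts.j), ts.hij⟩ : PairT m) then ts.c else 0)).prod =
          toSL A ts := by
        have : (List.ofFn fun k : Fin QL.length =>
            elemMatrix A (QL.get k).1.1 (QL.get k).1.2 (QL.get k).2
              (if QL.get k = (⟨(ts.i, ts.j), ts.hij⟩ : PairT m) then ts.c else 0)) =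
            QL.map fun p => elemMatrix A p.1.1 p.1.2 p.2
              (if p = (⟨(ts.i, ts.j), ts.hij⟩ : PairT m) then ts.c else 0) := by
          conv_rhs => rw [← List.ofFn_get QL, List.map_ofFn]
          rfl
        rw [this]
        exact block_real A QL (Finset.nodup_toList _) ts
          (by rw [hQL, Finset.mem_toList]; exact Finset.mem_univ _)
      rw [hhead]
      simp

end Stmt5Aux


namespace Stmt5Aux

open Matrix Matrix.TransvectionStruct Sum Unit

section pivot

variable {S : Type*} [CommRing S] {r : ℕ} (M : Matrix (Fin r ⊕ Unit) (Fin r ⊕ Unit) S)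

/-- Transvections clearing the last column (pivot assumed to be 1). -/
def listC : List (Matrix (Fin r ⊕ Unit) (Fin r ⊕ Unit) S) :=
  List.ofFn fun i : Fin r => transvection (inl i) (inr unit) (-M (inl i) (inr unit))

/-- Transvections clearing the last row (pivot assumed to be 1). -/
def listR : List (Matrix (Fin r ⊕ Unit) (Fin r ⊕ Unit) S) :=
  List.ofFn fun i : Fin r => transvection (inr unit) (inl i) (-M (inr unit) (inl i))

@[simp]
theorem length_listC : (listC M).length = r := by simp [listC]

@[simp]
theorem length_listR : (listR M).length = r := by simp [listR]

theorem listC_mul_last_row_drop (i : Fin r ⊕ Unit) {k : ℕ} (hk : k ≤ r) :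
    (((listC M).drop k).prod * M) (inr unit) i = M (inr unit) i := by
  induction hk using Nat.decreasingInduction with
  | of_succ n hn IH =>
    have hn' : n < (listC M).length := by simpa [listC] using hn
    rw [List.drop_eq_getElem_cons hn']
    have A : (listC M)[n] =
        transvection (inl (⟨n, hn⟩ : Fin r)) (inr unit) (-M (inl ⟨n, hn⟩) (inr unit)) := by
      simp [listC]
    simpa [A, Matrix.mul_assoc]
  | self =>
    simp only [length_listC, le_refl, List.drop_eq_nil_of_le, List.prod_nil, Matrix.one_mul]

theorem listC_mul_last_row (i : Fin r ⊕ Unit) :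
    ((listC M).prod * M) (inr unit) i = M (inr unit) i := by
  simpa using listC_mul_last_row_drop M i (Nat.zero_le _)

theorem listC_mul_last_col (hM : M (inr unit) (inr unit) = 1) (i : Fin r) :
    ((listC M).prod * M) (inl i) (inr unit) = 0 := by
  suffices H :
    ∀ k : ℕ, k ≤ r →
        (((listC M).drop k).prod * M) (inl i) (inr unit) =
          if k ≤ i then 0 else M (inl i) (inr unit) by
    simpa only [List.drop, _root_.zero_le, ite_true] using H 0 (Nat.zero_le _)
  intro k hk
  induction hk using Nat.decreasingInduction with
  | of_succ n hn IH =>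
    have hn' : n < (listC M).length := by simpa [listC] using hn
    let n' : Fin r := ⟨n, hn⟩
    rw [List.drop_eq_getElem_cons hn']
    have A : (listC M)[n] = transvection (inl n') (inr unit) (-M (inl n') (inr unit)) := by
      simp [listC]
      rfl
    simp only [Matrix.mul_assoc, A, List.prod_cons]
    by_cases h : n' = i
    · have hni : n = i := by
        cases i
        simp only [n', Fin.mk_eq_mk] at h
        simp [h]
      simp only [h, transvection_mul_apply_same, IH, ← hni, add_le_iff_nonpos_right,
          listC_mul_last_row_drop _ _ hn]
      simp [hM]
    · have hni : n ≠ i := by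
        rintro rfl
        cases i
        exact h rfl
      simp only [ne_eq, inl.injEq, Ne.symm h, not_false_eq_true, transvection_mul_apply_of_ne]
      rw [IH]
      rcases le_or_gt (n + 1) i with (hi | hi)
      · simp only [hi, n.le_succ.trans hi, if_true]
      · rw [if_neg, if_neg]
        · simpa only [hni.symm, not_le, or_false] using Nat.lt_succ_iff_lt_or_eq.1 hi
        · simpa only [not_le] using hi
  | self =>
    simp only [length_listC, le_refl, List.drop_eq_nil_of_le, List.prod_nil, Matrix.one_mul]
    rw [if_neg]
    simpa only [not_le] using i.2

theorem mul_listR_last_col_take (i : Fin r ⊕ Unit) {k : ℕ} (hk : k ≤ r) :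
    (M * ((listR M).take k).prod) i (inr unit) = M i (inr unit) := by
  induction' k with k IH
  · simp only [Matrix.mul_one, List.take_zero, List.prod_nil, List.take, Matrix.mul_one]
  · have hkr : k < r := hk
    let k' : Fin r := ⟨k, hkr⟩
    have A : (listR M)[k]? =
        ↑(transvection (inr Unit.unit) (inl k') (-M (inr Unit.unit) (inl k'))) := by
      simp only [listR, List.ofFnNthVal, hkr, dif_pos, List.getElem?_ofFn]
      rfl
    simp only [List.take_succ, ← Matrix.mul_assoc, A, List.prod_append, Matrix.mul_one,
      List.prod_cons, List.prod_nil, Option.toList_some]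
    rw [mul_transvection_apply_of_ne, IH hkr.le]
    simp only [Ne, not_false_iff, reduceCtorEq]

theorem mul_listR_last_col (i : Fin r ⊕ Unit) :
    (M * (listR M).prod) i (inr unit) = M i (inr unit) := by
  have A : (listR M).length = r := by simp [listR]
  rw [← List.take_length (l := listR M), A]
  simpa using mul_listR_last_col_take M i le_rfl

theorem mul_listR_last_row (hM : M (inr unit) (inr unit) = 1) (i : Fin r) :
    (M * (listR M).prod) (inr unit) (inl i) = 0 := by
  suffices H :
    ∀ k : ℕ, k ≤ r →
        (M * ((listR M).take k).prod) (inr unit) (inl i) =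
          if k ≤ i then M (inr unit) (inl i) else 0 by
    have A : (listR M).length = r := by simp [listR]
    rw [← List.take_length (l := listR M), A]
    have : ¬r ≤ i := by simp
    simpa only [this, ite_eq_right_iff, if_false] using H r le_rfl
  intro k hk
  induction' k with n IH
  · simp only [if_true, Matrix.mul_one, List.take_zero, zero_le', List.prod_nil]
  · have hnr : n < r := hk
    let n' : Fin r := ⟨n, hnr⟩
    have A : (listR M)[n]? =
        ↑(transvection (inr unit) (inl n') (-M (inr unit) (inl n'))) := by
      simp only [listR, List.ofFnNthVal, hnr, dif_pos, List.getElem?_ofFn]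
      rfl
    simp only [List.take_succ, A, ← Matrix.mul_assoc, List.prod_append, Matrix.mul_one,
      List.prod_cons, List.prod_nil, Option.toList_some]
    by_cases h : n' = i
    · have hni : n = i := by
        cases i
        simp only [n', Fin.mk_eq_mk] at h
        simp only [h]
      have : ¬n.succ ≤ i := by simp only [← hni, n.lt_succ_self, not_le]
      simp only [h, mul_transvection_apply_same, List.take, if_false,
        mul_listR_last_col_take _ _ hnr.le, hni.le, this, if_true, IH hnr.le]
      simp [hM]
    · have hni : n ≠ i := by
        rintro rfl
        cases i
        tauto
      simp only [IH hnr.le, Ne, mul_transvection_apply_of_ne, Ne.symm h, inl.injEq,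
        not_false_eq_true]
      rcases le_or_gt (n + 1) i with (hi | hi)
      · simp [hi, n.le_succ.trans hi, if_true]
      · rw [if_neg, if_neg]
        · simpa only [not_le] using hi
        · simpa only [hni.symm, not_le, or_false] using Nat.lt_succ_iff_lt_or_eq.1 hi

theorem listC_mul_mul_listR_last_col (hM : M (inr unit) (inr unit) = 1) (i : Fin r) :
    ((listC M).prod * M * (listR M).prod) (inr unit) (inl i) = 0 := by
  have : listR M = listR ((listC M).prod * M) := by
    simp [listR, listC_mul_last_row]
  rw [this]
  apply mul_listR_last_row
  simpa [listC_mul_last_row] using hM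

theorem listC_mul_mul_listR_last_row (hM : M (inr unit) (inr unit) = 1) (i : Fin r) :
    ((listC M).prod * M * (listR M).prod) (inl i) (inr unit) = 0 := by
  have : listC M = listC (M * (listR M).prod) := by
    simp [listC, mul_listR_last_col]
  rw [this, Matrix.mul_assoc]
  apply listC_mul_last_col
  simpa [mul_listR_last_col] using hM

theorem listC_mul_mul_listR_pivot (hM : M (inr unit) (inr unit) = 1) :
    ((listC M).prod * M * (listR M).prod) (inr unit) (inr unit) = 1 := by
  have : listR M = listR ((listC M).prod * M) := by
    simp [listR, listC_mul_last_row]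
  rw [this, mul_listR_last_col ((listC M).prod * M) (inr unit), listC_mul_last_row]
  exact hM

/-- Structured version: clearing the last row and column. -/
theorem exists_block_decomposition (hM : M (inr unit) (inr unit) = 1) :
    ∃ L L' : List (TransvectionStruct (Fin r ⊕ Unit) S),
      L.length = r ∧ L'.length = r ∧
      ∃ A : Matrix (Fin r) (Fin r) S,
        (L.map toMatrix).prod * M * (L'.map toMatrix).prod = fromBlocks A 0 0 1 := by
  let L : List (TransvectionStruct (Fin r ⊕ Unit) S) :=
    List.ofFn fun i : Fin r => ⟨inl i, inr unit, by simp, -M (inl i) (inr unit)⟩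
  let L' : List (TransvectionStruct (Fin r ⊕ Unit) S) :=
    List.ofFn fun i : Fin r => ⟨inr unit, inl i, by simp, -M (inr unit) (inl i)⟩
  have A : L.map toMatrix = listC M := by simp [L, listC, Function.comp_def]
  have B : L'.map toMatrix = listR M := by simp [L', listR, Function.comp_def]
  refine ⟨L, L', by simp [L], by simp [L'], ?_⟩
  rw [A, B]
  set N := (listC M).prod * M * (listR M).prod with hN
  refine ⟨N.toBlocks₁₁, ?_⟩
  ext a b
  rcases a with a | a <;> rcases b with b | b
  · simp [fromBlocks, toBlocks₁₁]
  · simp only [fromBlocks, of_apply, Sum.elim_inl, Sum.elim_inr, Matrix.zero_apply]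
    have : b = unit := Subsingleton.elim _ _
    rw [this]
    exact listC_mul_mul_listR_last_row M hM a
  · simp only [fromBlocks, of_apply, Sum.elim_inr, Sum.elim_inl, Matrix.zero_apply]
    have : a = unit := Subsingleton.elim _ _
    rw [this]
    exact listC_mul_mul_listR_last_col M hM b
  · simp only [fromBlocks, of_apply, Sum.elim_inr]
    have ha : a = unit := Subsingleton.elim _ _
    have hb : b = unit := Subsingleton.elim _ _
    rw [ha, hb]
    rw [show (1 : Matrix Unit Unit S) unit unit = 1 from Matrix.one_apply_eq _]
    exact listC_mul_mul_listR_pivot M hM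

end pivot

end Stmt5Aux


namespace Stmt5Aux

open Matrix Matrix.TransvectionStruct Sum Unit

section makepivot

variable {S : Type*} [CommRing S] {r : ℕ}

theorem exists_make_pivot (hr : 0 < r) (M : Matrix (Fin r ⊕ Unit) (Fin r ⊕ Unit) S)
    (i₀ : Fin r ⊕ Unit) (hu : IsUnit (M i₀ (inr unit))) :
    ∃ L : List (TransvectionStruct (Fin r ⊕ Unit) S),
      L.length ≤ 2 ∧ ((L.map toMatrix).prod * M) (inr unit) (inr unit) = 1 := by
  obtain ⟨u, hu⟩ := hu
  rcases i₀ with i | _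
  · -- pivot unit in row `inl i`
    refine ⟨[⟨inr unit, inl i, by simp, (1 - M (inr unit) (inr unit)) * ↑u⁻¹⟩],
      by simp, ?_⟩
    simp only [List.map_cons, List.map_nil, List.prod_cons, List.prod_nil, Matrix.mul_one,
      toMatrix_mk]
    rw [transvection_mul_apply_same]
    rw [← hu]
    simp [mul_assoc]
  · -- pivot entry itself is a unit
    set i0 : Fin r := ⟨0, hr⟩
    refine ⟨[⟨inr unit, inl i0, by simp, 1 - M (inr unit) (inr unit)⟩,
             ⟨inl i0, inr unit, by simp, (1 - M (inl i0) (inr unit)) * ↑u⁻¹⟩],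
      by simp, ?_⟩
    simp only [List.map_cons, List.map_nil, List.prod_cons, List.prod_nil, Matrix.mul_one,
      toMatrix_mk, Matrix.mul_assoc]
    rw [transvection_mul_apply_same]
    rw [transvection_mul_apply_of_ne _ _ _ _ (by simp : (inr unit : Fin r ⊕ Unit) ≠ inl i0)]
    rw [transvection_mul_apply_same]
    rw [← hu]
    simp [mul_assoc]
end makepivot

end Stmt5Aux


namespace Stmt5Aux

/-- If elements `x i` generate the unit ideal of `R`, and for each `i` the images of the
`b i k` generate the unit ideal of `R[1/x i]`, then the products `x i * b i k`
generate the unit ideal of `R`. -/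
theorem span_transfer {R : Type} [CommRing R] {u : ℕ} (x : Fin u → R)
    (hx : Ideal.span (Set.range x) = ⊤)
    {v : Fin u → ℕ} (b : ∀ i, Fin (v i) → R)
    (hb : ∀ i, Ideal.span
      (Set.range fun k => algebraMap R (Localization.Away (x i)) (b i k)) = ⊤) :
    Ideal.span (Set.range fun p : Σ i : Fin u, Fin (v i) => x p.1 * b p.1 p.2) = ⊤ := by
  by_contra h
  obtain ⟨m, hm, hle⟩ := Ideal.exists_le_maximal _ h
  have hprime : m.IsPrime := hm.isPrime
  -- some x i is not in m
  have : ¬ ∀ i, x i ∈ m := by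
    intro hall
    have : Ideal.span (Set.range x) ≤ m := by
      rw [Ideal.span_le]
      rintro _ ⟨i, rfl⟩
      exact hall i
    rw [hx] at this
    exact hm.ne_top (top_le_iff.mp this)
  obtain ⟨i, hi⟩ := not_forall.mp this
  -- all b i k are in m
  have hbk : ∀ k, b i k ∈ m := by
    intro k
    have hmem : x i * b i k ∈ m := hle (Ideal.subset_span ⟨⟨i, k⟩, rfl⟩)
    exact (hprime.mem_or_mem hmem).resolve_left hi
  -- the extension of m to the localization is proper
  have hdisj : Disjoint ((Submonoid.powers (x i) : Submonoid R) : Set R) (m : Set R) := by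
    rw [Set.disjoint_left]
    rintro _ ⟨n, rfl⟩ hmem
    exact hi (hprime.mem_of_pow_mem n hmem)
  have hmap : (Ideal.map (algebraMap R (Localization.Away (x i))) m).IsPrime :=
    IsLocalization.isPrime_of_isPrime_disjoint (Submonoid.powers (x i)) _ m hprime hdisj
  have : Ideal.span
      (Set.range fun k => algebraMap R (Localization.Away (x i)) (b i k)) ≤
      Ideal.map (algebraMap R (Localization.Away (x i))) m := by
    rw [Ideal.span_le]
    rintro _ ⟨k, rfl⟩
    exact Ideal.mem_map_of_mem _ (hbk k)
  rw [hb i] at this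
  exact hmap.ne_top (top_le_iff.mp this)

end Stmt5Aux


namespace Stmt5Aux

open Matrix Matrix.TransvectionStruct Sum Unit

/-- The equivalence `Fin r ⊕ Unit ≃ Fin (r+1)` sending `inr unit` to `Fin.last r`. -/
def sumUnitEquiv (r : ℕ) : (Fin r ⊕ Unit) ≃ Fin (r + 1) :=
  (Equiv.sumCongr (Equiv.refl (Fin r)) (Equiv.ofUnique Unit (Fin 1))).trans finSumFinEquiv

lemma sumUnitEquiv_inr (r : ℕ) : sumUnitEquiv r (inr unit) = Fin.last r := by
  ext
  simp [sumUnitEquiv, Equiv.ofUnique, Fin.last]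

end Stmt5Aux

namespace Stmt5Aux

open Matrix Matrix.TransvectionStruct Sum Unit

theorem locstep {r : ℕ} (hr : 0 < r) (N : ℕ)
    (IH : ∀ (R : Type) [CommRing R] (g : Matrix (Fin r) (Fin r) R), g.det = 1 →
      ∃ (t : ℕ) (s : Fin t → R), Ideal.span (Set.range s) = ⊤ ∧
        ∀ k : Fin t, ∃ L : List (TransvectionStruct (Fin r) (Localization.Away (s k))),
          L.length ≤ N ∧
            g.map (algebraMap R (Localization.Away (s k))) = (L.map toMatrix).prod)
    (R : Type) [CommRing R] (g : Matrix (Fin (r+1)) (Fin (r+1)) R) (hdet : g.det = 1)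
    (i₀ : Fin (r+1)) :
    ∃ (t' : ℕ) (b : Fin t' → R),
      Ideal.span (Set.range fun k =>
        algebraMap R (Localization.Away (g i₀ (Fin.last r))) (b k)) = ⊤ ∧
      ∀ k : Fin t', ∃ L : List (TransvectionStruct (Fin (r+1))
          (Localization.Away (g i₀ (Fin.last r) * b k))),
        L.length ≤ N + 2*r + 2 ∧
        g.map (algebraMap R (Localization.Away (g i₀ (Fin.last r) * b k))) =
          (L.map toMatrix).prod := by
  set x := g i₀ (Fin.last r) with hx
  set S₀ := Localization.Away x with hS₀
  set M₀ := g.map (algebraMap R S₀) with hM₀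
  set e := sumUnitEquiv r with he
  set P := M₀.submatrix e e with hP
  have hPu : IsUnit (P (e.symm i₀) (inr unit)) := by
    have : P (e.symm i₀) (inr unit) = algebraMap R S₀ x := by
      simp [hP, hM₀, he, sumUnitEquiv_inr, Matrix.submatrix_apply, Matrix.map_apply]
      rfl
    rw [this]
    exact IsLocalization.Away.algebraMap_isUnit x
  obtain ⟨L₁, hL₁len, hL₁⟩ := exists_make_pivot hr P (e.symm i₀) hPu
  obtain ⟨L₂, L₃, hL₂len, hL₃len, A, hblock⟩ :=
    exists_block_decomposition ((L₁.map toMatrix).prod * P) hL₁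
  have hdetM₀ : M₀.det = 1 := by
    have := (RingHom.map_det (algebraMap R S₀) g).symm
    rw [RingHom.mapMatrix_apply] at this
    rw [hM₀, this, hdet, _root_.map_one]
  have hdetP : P.det = 1 := by
    rw [hP, Matrix.det_submatrix_equiv_self, hdetM₀]
  have hdetA : A.det = 1 := by
    have h1 := congrArg Matrix.det hblock
    rw [Matrix.det_mul, Matrix.det_mul, Matrix.det_mul, det_prod_toMatrix, det_prod_toMatrix,
      det_prod_toMatrix, hdetP, Matrix.det_fromBlocks_zero₂₁] at h1
    simpa using h1.symm
  obtain ⟨t', s', hspan', hfact'⟩ := IH S₀ A hdetA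
  choose nn b hb using fun k => IsLocalization.Away.surj (S := S₀) x (s' k)
  refine ⟨t', b, ?_, ?_⟩
  · rw [eq_top_iff, ← hspan', Ideal.span_le]
    rintro _ ⟨k, rfl⟩
    have hu : IsUnit ((algebraMap R S₀ x) ^ nn k) :=
      (IsLocalization.Away.algebraMap_isUnit x).pow (nn k)
    have hs'k : s' k = algebraMap R S₀ (b k) * ↑hu.unit⁻¹ := by
      rw [Units.eq_mul_inv_iff_mul_eq, IsUnit.unit_spec]
      exact hb k
    rw [hs'k]
    exact Ideal.mul_mem_right _ _ (Ideal.subset_span ⟨k, rfl⟩)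
  · intro k
    set W := Localization.Away (x * b k) with hW
    have hxbu : IsUnit (algebraMap R W x * algebraMap R W (b k)) := by
      rw [← _root_.map_mul]
      exact IsLocalization.Away.algebraMap_isUnit _
    have hxu : IsUnit (algebraMap R W x) := isUnit_of_mul_isUnit_left hxbu
    have hbu : IsUnit (algebraMap R W (b k)) := isUnit_of_mul_isUnit_right hxbu
    set χ : S₀ →+* W := IsLocalization.Away.lift (S := S₀) x hxu with hχdef
    have hχ : ∀ a : R, χ (algebraMap R S₀ a) = algebraMap R W a := fun a =>
      IsLocalization.Away.lift_eq x hxu a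
    have hχs' : IsUnit (χ (s' k)) := by
      have h1 : χ (s' k) * (algebraMap R W x) ^ nn k = algebraMap R W (b k) := by
        have h0 := congrArg χ (hb k)
        rw [_root_.map_mul, _root_.map_pow, hχ, hχ] at h0
        exact h0
      exact isUnit_of_mul_isUnit_left (show IsUnit (χ (s' k) * (algebraMap R W x) ^ nn k) by
        rw [h1]; exact hbu)
    set T' := Localization.Away (s' k) with hT'
    set φ : T' →+* W := IsLocalization.Away.lift (S := T') (s' k) hχs' with hφdef
    have hφ : ∀ u : S₀, φ (algebraMap S₀ T' u) = χ u := fun u =>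
      IsLocalization.Away.lift_eq (s' k) hχs' u
    obtain ⟨LA, hLAlen, hLA⟩ := hfact' k
    -- transport the factorization of A to W
    have hAχ : A.map χ = ((( LA.map (tmap φ)).map toMatrix)).prod := by
      rw [prod_tmap, ← hLA, Matrix.map_map]
      have hfun : (⇑φ ∘ ⇑(algebraMap S₀ T')) = ⇑χ := funext hφ
      rw [hfun]
    -- transport the block decomposition to W
    set Q := (g.map (algebraMap R W)).submatrix e e with hQ
    have hPQ : P.map χ = Q := by
      ext a c
      simp [hP, hQ, hM₀, Matrix.map_apply, Matrix.submatrix_apply, hχ]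
    have hfbmap : (fromBlocks A (0 : Matrix (Fin r) Unit S₀) (0 : Matrix Unit (Fin r) S₀)
        (1 : Matrix Unit Unit S₀)).map ⇑χ =
        fromBlocks (A.map ⇑χ) 0 0 1 := by
      ext a c
      rcases a with a | a <;> rcases c with c | c <;>
        simp [fromBlocks, Matrix.map_apply, Matrix.one_apply, apply_ite ⇑χ]
    have hblockW := congrArg (fun X : Matrix (Fin r ⊕ Unit) (Fin r ⊕ Unit) S₀ => X.map ⇑χ)
      hblock
    simp only [Matrix.map_mul] at hblockW
    rw [← prod_tmap χ L₁, ← prod_tmap χ L₂, ← prod_tmap χ L₃, hPQ, hfbmap] at hblockW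
    -- hblockW : L₂χ.prod * (L₁χ.prod * Q) * L₃χ.prod = fromBlocks (A.map χ) 0 0 1
    set LL : List (TransvectionStruct (Fin r ⊕ Unit) W) := L₂.map (tmap χ) ++ L₁.map (tmap χ)
      with hLL
    set L₃' : List (TransvectionStruct (Fin r ⊕ Unit) W) := L₃.map (tmap χ) with hL₃'
    have hQ2 : (LL.map toMatrix).prod * Q * (L₃'.map toMatrix).prod =
        fromBlocks (A.map χ) 0 0 1 := by
      rw [hLL, List.map_append, List.prod_append]
      rw [← Matrix.mul_assoc] at hblockW
      exact hblockW
    -- the middle block is a product of transvections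
    set LAW : List (TransvectionStruct (Fin r) W) := LA.map (tmap φ) with hLAW
    have hmid : fromBlocks (A.map χ) (0 : Matrix (Fin r) Unit W) 0 (1 : Matrix Unit Unit W) =
        ((LAW.map (sumInl Unit)).map toMatrix).prod := by
      have h2 := sumInl_toMatrix_prod_mul Unit (1 : Matrix (Fin r) (Fin r) W) LAW
        (1 : Matrix Unit Unit W)
      rw [Matrix.fromBlocks_one, Matrix.mul_one, Matrix.mul_one] at h2
      rw [hAχ, ← h2]
      simp [hLAW, List.map_map, Function.comp_def]
    -- invert
    have hinv1 := reverse_inv_prod_mul_prod LL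
    have hinv2 := prod_mul_reverse_inv_prod L₃'
    have hQform : Q =
        ((LL.reverse.map TransvectionStruct.inv).map toMatrix).prod *
          fromBlocks (A.map χ) 0 0 1 *
          ((L₃'.reverse.map TransvectionStruct.inv).map toMatrix).prod := by
      rw [← hQ2]
      rw [← List.map_map (g := toMatrix) (f := TransvectionStruct.inv) (l := LL.reverse)] at hinv1
      rw [← List.map_map (g := toMatrix) (f := TransvectionStruct.inv) (l := L₃'.reverse)] at hinv2
      calc Q = ((LL.reverse.map TransvectionStruct.inv).map toMatrix).prod *
            (LL.map toMatrix).prod * Q *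
            ((L₃'.map toMatrix).prod * ((L₃'.reverse.map TransvectionStruct.inv).map
              toMatrix).prod) := by
              rw [hinv1, hinv2, Matrix.one_mul, Matrix.mul_one]
        _ = ((LL.reverse.map TransvectionStruct.inv).map toMatrix).prod *
            ((LL.map toMatrix).prod * Q * (L₃'.map toMatrix).prod) *
            ((L₃'.reverse.map TransvectionStruct.inv).map toMatrix).prod := by
              simp only [Matrix.mul_assoc]
    set BIG : List (TransvectionStruct (Fin r ⊕ Unit) W) :=
      LL.reverse.map TransvectionStruct.inv ++ LAW.map (sumInl Unit) ++
        L₃'.reverse.map TransvectionStruct.inv with hBIG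
    have hQBIG : Q = (BIG.map toMatrix).prod := by
      rw [hBIG, List.map_append, List.map_append, List.prod_append, List.prod_append]
      rw [hQform, hmid]
    refine ⟨BIG.map (reindexEquiv e), ?_, ?_⟩
    · rw [List.length_map, hBIG]
      simp only [List.length_append, List.length_map, List.length_reverse, hLL, hLAW, hL₃',
        List.length_append, List.length_map]
      omega
    · have hre := toMatrix_reindexEquiv_prod (R := W) e BIG
      rw [← List.map_map (g := toMatrix) (f := reindexEquiv e) (l := BIG)]  at hre
      rw [hre, ← hQBIG, Matrix.reindexAlgEquiv_apply, Matrix.reindex_apply, hQ,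
        Matrix.submatrix_submatrix]
      simp
      rfl

end Stmt5Aux

namespace Stmt5Aux

open Matrix Matrix.TransvectionStruct

theorem core (m : ℕ) :
    ∃ N : ℕ, ∀ (R : Type) [CommRing R] (g : Matrix (Fin m) (Fin m) R), g.det = 1 →
      ∃ (t : ℕ) (s : Fin t → R), Ideal.span (Set.range s) = ⊤ ∧
        ∀ k : Fin t, ∃ L : List (TransvectionStruct (Fin m) (Localization.Away (s k))),
          L.length ≤ N ∧
            g.map (algebraMap R (Localization.Away (s k))) = (L.map toMatrix).prod := by
  induction m with
  | zero =>
    refine ⟨0, fun R _ g hg => ⟨1, fun _ => 1, ?_, ?_⟩⟩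
    · rw [Ideal.eq_top_iff_one]
      exact Ideal.subset_span ⟨0, rfl⟩
    · intro k
      refine ⟨[], by simp, ?_⟩
      ext i j
      exact i.elim0
  | succ r IH =>
    rcases Nat.eq_zero_or_pos r with rfl | hr
    · -- matrices of size 1
      refine ⟨0, fun R _ g hg => ⟨1, fun _ => 1, ?_, ?_⟩⟩
      · rw [Ideal.eq_top_iff_one]
        exact Ideal.subset_span ⟨0, rfl⟩
      · intro k
        refine ⟨[], by simp, ?_⟩
        have hg' : g = 1 := by
          ext i j
          fin_cases i
          fin_cases j
          rw [Matrix.det_fin_one] at hg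
          simp [hg]
        rw [hg', List.map_nil, List.prod_nil]
        exact Matrix.map_one _ (map_zero _) (map_one _)
    · obtain ⟨N, hN⟩ := IH
      refine ⟨N + 2*r + 2, fun R _ g hg => ?_⟩
      have H := fun i₀ => locstep hr N (fun R' _ g' hg' => hN R' g' hg') R g hg i₀
      choose t' b hspanb hfact using H
      have hxspan : Ideal.span (Set.range fun i => g i (Fin.last r)) = ⊤ := by
        rw [Ideal.eq_top_iff_one, ← hg, Matrix.det_succ_column g (Fin.last r)]
        apply Ideal.sum_mem
        intro i _
        exact Ideal.mul_mem_right _ _ (Ideal.mul_mem_left _ _ (Ideal.subset_span ⟨i, rfl⟩))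
      have hspan := span_transfer (fun i => g i (Fin.last r)) hxspan b hspanb
      refine ⟨Fintype.card (Σ i : Fin (r+1), Fin (t' i)),
        (fun p : Σ i : Fin (r+1), Fin (t' i) => g p.1 (Fin.last r) * b p.1 p.2) ∘
          (Fintype.equivFin (Σ i : Fin (r+1), Fin (t' i))).symm, ?_, ?_⟩
      · rw [Function.Surjective.range_comp (Equiv.surjective _)]
        exact hspan
      · intro k
        exact hfact ((Fintype.equivFin (Σ i : Fin (r+1), Fin (t' i))).symm k).1
          ((Fintype.equivFin (Σ i : Fin (r+1), Fin (t' i))).symm k).2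

lemma coe_list_prod {m : ℕ} (A : Type) [CommRing A]
    (l : List (Matrix.SpecialLinearGroup (Fin m) A)) :
    (l.prod).val = (l.map Subtype.val).prod := by
  induction l with
  | nil => rfl
  | cons x l IH => simp [Matrix.SpecialLinearGroup.coe_mul, IH]; rfl

end Stmt5Aux
/-- **Proposition (Zariski-local uniform elementary factorization).**
For every `m ≥ 1` there is a fixed sequence of index pairs `(i₁,j₁), …, (i_r,j_r)`
(with `i_k ≠ j_k`) such that for every commutative ring `R` and every `g ∈ SL_m(R)`
there are finitely many elements `s₁, …, s_t ∈ R` generating the unit ideal such that,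
for each `k`, the image of `g` in `SL_m(R[1/sₖ])` is a product
`e_{i₁j₁}(a₁) ⋯ e_{i_rj_r}(a_r)` with `a₁, …, a_r ∈ R[1/sₖ]`. -/
theorem stmt5 (m : ℕ) (hm : 1 ≤ m) :
    ∃ (r : ℕ) (idx : Fin r → Fin m × Fin m) (hne : ∀ k, (idx k).1 ≠ (idx k).2),
      ∀ (R : Type) [CommRing R], ∀ g : Matrix.SpecialLinearGroup (Fin m) R,
        ∃ (t : ℕ) (s : Fin t → R), Ideal.span (Set.range s) = ⊤ ∧
          ∀ k : Fin t, ∃ a : Fin r → Localization.Away (s k),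
            Matrix.SpecialLinearGroup.map
              (algebraMap R (Localization.Away (s k))) g =
            (List.ofFn fun k' =>
              elemMatrix (Localization.Away (s k)) (idx k').1 (idx k').2
                (hne k') (a k')).prod := by
  classical
  obtain ⟨N, hcore⟩ := Stmt5Aux.core m
  obtain ⟨r, q, hq⟩ := Stmt5Aux.realize m N
  refine ⟨r, fun k => (q k).1, fun k => (q k).2, ?_⟩
  intro R _ g
  obtain ⟨t, s, hspan, hfact⟩ := hcore R g.1 g.2
  refine ⟨t, s, hspan, ?_⟩
  intro k
  obtain ⟨L, hlen, hL⟩ := hfact k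
  obtain ⟨a, ha⟩ := hq (Localization.Away (s k)) L hlen
  refine ⟨a, ?_⟩
  have hgoal : Matrix.SpecialLinearGroup.map (algebraMap R (Localization.Away (s k))) g =
      (L.map (Stmt5Aux.toSL (Localization.Away (s k)))).prod := by
    apply Subtype.ext
    rw [Stmt5Aux.coe_list_prod]; erw [List.map_map]
    have h1 : (Subtype.val ∘ Stmt5Aux.toSL (Localization.Away (s k)) :
        Matrix.TransvectionStruct (Fin m) (Localization.Away (s k)) →
          Matrix (Fin m) (Fin m) (Localization.Away (s k))) =
        Matrix.TransvectionStruct.toMatrix := rfl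
    rw [h1, ← hL]
    rfl
  rw [hgoal]
  exact ha.symm
end

section
/- Let R be a commutative ring, M an R-module, I an ideal of R, and S a finite set of maximal ideals of R none of which contains I. Let m_1, …, m_t ∈ M be such that for every 𝔪 ∈ S the elements m_1(𝔪), …, m_t(𝔪) do not generate M(𝔪) as a κ(𝔪)-vector space, and let b ∈ M. Then there exists m_{t+1} ∈ M with m_{t+1} − b ∈ IM such that for every 𝔪 ∈ S, dim_{κ(𝔪)} Span_{κ(𝔪)}{m_1(𝔪), …, m_{t+1}(𝔪)} = dim_{κ(𝔪)} Span_{κ(𝔪)}{m_1(𝔪), …, m_t(𝔪)} + 1. -/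
open TensorProduct

lemma finrank_span_insert_of_not_mem' {K V : Type*} [Field K] [AddCommGroup V] [Module K V]
    {s : Set V} (hs : s.Finite) {x : V} (hx : x ∉ Submodule.span K s) :
    Module.finrank K (Submodule.span K (insert x s)) =
      Module.finrank K (Submodule.span K s) + 1 := by
  have hx0 : x ≠ 0 := fun h => hx (h ▸ Submodule.zero_mem _)
  haveI : FiniteDimensional K (Submodule.span K s) := FiniteDimensional.span_of_finite K hs
  haveI : FiniteDimensional K (K ∙ x) :=
    FiniteDimensional.span_of_finite K (Set.finite_singleton x)
  have hdis : Disjoint (Submodule.span K s) (K ∙ x) :=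
    (Submodule.disjoint_span_singleton' hx0).mpr hx
  have key := Submodule.finrank_sup_add_finrank_inf_eq (Submodule.span K s) (K ∙ x)
  rw [hdis.eq_bot, finrank_bot, add_zero, finrank_span_singleton hx0] at key
  rw [Submodule.span_insert, sup_comm, key]

/-- **Lemma (swapping in new generators with prescribed residue modulo `I`).**
Let `S` be a finite set of maximal ideals of `R`, none containing the ideal `I`, and let
`m₁, …, m_t ∈ M` be such that their images fail to generate `M(𝔪) = (R/𝔪) ⊗_R M` for every
`𝔪 ∈ S`.  Then for any `b ∈ M` there is `m' ∈ M` with `m' - b ∈ IM` whose image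
increases the dimension of the span at every `𝔪 ∈ S` by exactly one. -/
theorem stmt6 (R : Type*) [CommRing R] (M : Type*) [AddCommGroup M] [Module R M]
    (I : Ideal R) (S : Finset (MaximalSpectrum R))
    (hIS : ∀ 𝔪 ∈ S, ¬ I ≤ 𝔪.asIdeal)
    (t : ℕ) (m : Fin t → M)
    (h : ∀ 𝔪 ∈ S, Submodule.span (R ⧸ 𝔪.asIdeal)
      (Set.range fun i : Fin t => (1 : R ⧸ 𝔪.asIdeal) ⊗ₜ[R] m i) ≠ ⊤)
    (b : M) :
    ∃ m' : M, m' - b ∈ I • (⊤ : Submodule R M) ∧ ∀ 𝔪 ∈ S,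
      Module.finrank (R ⧸ 𝔪.asIdeal) (Submodule.span (R ⧸ 𝔪.asIdeal)
        (insert ((1 : R ⧸ 𝔪.asIdeal) ⊗ₜ[R] m')
          (Set.range fun i : Fin t => (1 : R ⧸ 𝔪.asIdeal) ⊗ₜ[R] m i))) =
      Module.finrank (R ⧸ 𝔪.asIdeal) (Submodule.span (R ⧸ 𝔪.asIdeal)
        (Set.range fun i : Fin t => (1 : R ⧸ 𝔪.asIdeal) ⊗ₜ[R] m i)) + 1 := by
  classical
  have hterm : ∀ (𝔪 : MaximalSpectrum R) (r : R) (x : M),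
      (1 : R ⧸ 𝔪.asIdeal) ⊗ₜ[R] (r • x) =
        (Ideal.Quotient.mk 𝔪.asIdeal r) • ((1 : R ⧸ 𝔪.asIdeal) ⊗ₜ[R] x) := by
    intro 𝔪 r x
    rw [← smul_tmul, smul_tmul', smul_eq_mul, mul_one, Algebra.smul_def, mul_one]
    rfl
  have key : ∀ 𝔪 ∈ S, ∃ c : R, ∃ n : M, c ∈ I ∧ (∀ 𝔪' ∈ S, 𝔪' ≠ 𝔪 → c ∈ 𝔪'.asIdeal) ∧
      (1 : R ⧸ 𝔪.asIdeal) ⊗ₜ[R] b +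
        (Ideal.Quotient.mk 𝔪.asIdeal c) • ((1 : R ⧸ 𝔪.asIdeal) ⊗ₜ[R] n) ∉
        Submodule.span (R ⧸ 𝔪.asIdeal)
          (Set.range fun i : Fin t => (1 : R ⧸ 𝔪.asIdeal) ⊗ₜ[R] m i) := by
    intro 𝔪 h𝔪
    letI : Field (R ⧸ 𝔪.asIdeal) := Ideal.Quotient.field 𝔪.asIdeal
    obtain ⟨a, haI, ha𝔪⟩ := SetLike.not_le_iff_exists.mp (hIS 𝔪 h𝔪)
    have hprod : ¬ (∏ 𝔪' ∈ S.erase 𝔪, 𝔪'.asIdeal) ≤ 𝔪.asIdeal := by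
      rw [Ideal.IsPrime.prod_le 𝔪.isMaximal.isPrime]
      rintro ⟨𝔪', h𝔪', hle⟩
      exact (Finset.mem_erase.mp h𝔪').1
        (MaximalSpectrum.ext (𝔪'.isMaximal.eq_of_le 𝔪.isMaximal.ne_top hle))
    obtain ⟨e, heP, he𝔪⟩ := SetLike.not_le_iff_exists.mp hprod
    have hcI : e * a ∈ I := Ideal.mul_mem_left _ _ haI
    have hc𝔪' : ∀ 𝔪' ∈ S, 𝔪' ≠ 𝔪 → e * a ∈ 𝔪'.asIdeal := fun 𝔪' hS' hne =>
      Ideal.mul_mem_right _ _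
        (Ideal.prod_le_inf.trans (Finset.inf_le (Finset.mem_erase.mpr ⟨hne, hS'⟩)) heP)
    have hc𝔪 : e * a ∉ 𝔪.asIdeal := fun hc' =>
      ((𝔪.isMaximal.isPrime.mem_or_mem hc').elim he𝔪 ha𝔪)
    have hcne : (Ideal.Quotient.mk 𝔪.asIdeal (e * a)) ≠ 0 := by
      exact fun h0 => hc𝔪 (Ideal.Quotient.eq_zero_iff_mem.mp h0)
    obtain ⟨v, hv⟩ : ∃ v, v ∉ Submodule.span (R ⧸ 𝔪.asIdeal)
        (Set.range fun i : Fin t => (1 : R ⧸ 𝔪.asIdeal) ⊗ₜ[R] m i) := by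
      by_contra hv
      push_neg at hv
      exact h 𝔪 h𝔪 (Submodule.eq_top_iff'.mpr hv)
    obtain ⟨n, hn⟩ := TensorProduct.mk_surjective R M (R ⧸ 𝔪.asIdeal)
      Ideal.Quotient.mk_surjective
      ((Ideal.Quotient.mk 𝔪.asIdeal (e * a))⁻¹ • (v - (1 : R ⧸ 𝔪.asIdeal) ⊗ₜ[R] b))
    refine ⟨e * a, n, hcI, hc𝔪', ?_⟩
    have hn' : (1 : R ⧸ 𝔪.asIdeal) ⊗ₜ[R] n =
        (Ideal.Quotient.mk 𝔪.asIdeal (e * a))⁻¹ • (v - (1 : R ⧸ 𝔪.asIdeal) ⊗ₜ[R] b) := hn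
    rw [hn', smul_smul, mul_inv_cancel₀ hcne, one_smul]
    simpa using hv
  choose! c n hcI hc0 hcn using key
  refine ⟨b + ∑ 𝔪 ∈ S, c 𝔪 • n 𝔪, ?_, ?_⟩
  · simp only [add_sub_cancel_left]
    exact Submodule.sum_mem _ fun 𝔪 h𝔪 =>
      Submodule.smul_mem_smul (hcI 𝔪 h𝔪) Submodule.mem_top
  · intro 𝔪 h𝔪
    letI : Field (R ⧸ 𝔪.asIdeal) := Ideal.Quotient.field 𝔪.asIdeal
    have himg : (1 : R ⧸ 𝔪.asIdeal) ⊗ₜ[R] (b + ∑ 𝔪' ∈ S, c 𝔪' • n 𝔪') =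
        (1 : R ⧸ 𝔪.asIdeal) ⊗ₜ[R] b +
          (Ideal.Quotient.mk 𝔪.asIdeal (c 𝔪)) • ((1 : R ⧸ 𝔪.asIdeal) ⊗ₜ[R] n 𝔪) := by
      rw [TensorProduct.tmul_add, TensorProduct.tmul_sum]
      congr 1
      rw [Finset.sum_congr rfl fun 𝔪' _ => hterm 𝔪 (c 𝔪') (n 𝔪')]
      refine Finset.sum_eq_single_of_mem 𝔪 h𝔪 fun 𝔪' hS' hne => ?_
      rw [Ideal.Quotient.eq_zero_iff_mem.mpr (hc0 𝔪' hS' 𝔪 h𝔪 (Ne.symm hne)), zero_smul]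
    rw [himg]
    exact finrank_span_insert_of_not_mem' (Set.finite_range _) (hcn 𝔪 h𝔪)
end

section
/- Let R be a semilocal commutative ring such that R/𝔪 is infinite for every maximal ideal 𝔪 of R, let s ∈ ℕ, and let f ∈ R[t_1, …, t_s] be a polynomial whose image in (R/𝔪)[t_1, …, t_s] is nonzero for every maximal ideal 𝔪 of R. Then there exist r_1, …, r_s ∈ R such that f(r_1, …, r_s) is a unit of R. -/
/-- **Lemma (unit values of polynomials over semilocal rings with infinite residue fields).**
Let `R` be a semilocal commutative ring all of whose residue fields are infinite, and let
`f ∈ R[t₁, …, t_s]` be a polynomial whose image modulo every maximal ideal is nonzero.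
Then `f` takes a unit value at some point of `R^s`. -/
theorem stmt7 (R : Type*) [CommRing R]
    (hsemi : {I : Ideal R | I.IsMaximal}.Finite)
    (hres : ∀ 𝔪 : Ideal R, 𝔪.IsMaximal → Infinite (R ⧸ 𝔪))
    (s : ℕ) (f : MvPolynomial (Fin s) R)
    (hf : ∀ 𝔪 : Ideal R, 𝔪.IsMaximal →
      MvPolynomial.map (Ideal.Quotient.mk 𝔪) f ≠ 0) :
    ∃ r : Fin s → R, IsUnit (MvPolynomial.eval r f) := by
  classical
  haveI : Finite {I : Ideal R | I.IsMaximal} := hsemi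
  set ι := {I : Ideal R | I.IsMaximal}
  have hx : ∀ 𝔪 : ι, ∃ x : Fin s → R ⧸ (𝔪 : Ideal R),
      MvPolynomial.eval x (MvPolynomial.map (Ideal.Quotient.mk (𝔪 : Ideal R)) f) ≠ 0 := by
    rintro ⟨𝔪, hm⟩
    haveI : 𝔪.IsMaximal := hm
    haveI := Ideal.Quotient.field 𝔪
    haveI := hres 𝔪 hm
    by_contra h
    push_neg at h
    exact hf 𝔪 hm (MvPolynomial.funext (fun x => by simp [h x]))
  choose x hxne using hx
  have hcop : Pairwise (Function.onFun IsCoprime fun 𝔪 : ι => (𝔪 : Ideal R)) := by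
    rintro ⟨M, hM⟩ ⟨N, hN⟩ hne
    exact (Ideal.isCoprime_iff_sup_eq).2 (Ideal.IsMaximal.coprime_of_ne hM hN (by simpa [Subtype.ext_iff] using hne))
  have hsurj := Ideal.quotientInfToPiQuotient_surj hcop
  have hsurj' : Function.Surjective
      (fun (r : R) (𝔪 : ι) => Ideal.Quotient.mk (𝔪 : Ideal R) r) := by
    intro g
    obtain ⟨y, hy⟩ := hsurj g
    obtain ⟨r, rfl⟩ := Ideal.Quotient.mk_surjective y
    exact ⟨r, hy⟩
  choose lift hlift using fun i => hsurj' (fun 𝔪 => x 𝔪 i)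
  refine ⟨lift, ?_⟩
  by_contra hu
  obtain ⟨𝔪, hm, hmem⟩ := Ideal.exists_le_maximal _ (Ideal.span_singleton_ne_top hu)
  have h1 : Ideal.Quotient.mk 𝔪 (MvPolynomial.eval lift f) = 0 :=
    Ideal.Quotient.eq_zero_iff_mem.2 (hmem (Ideal.mem_span_singleton_self _))
  have h2 : Ideal.Quotient.mk 𝔪 (MvPolynomial.eval lift f)
      = MvPolynomial.eval (fun i => Ideal.Quotient.mk 𝔪 (lift i))
        (MvPolynomial.map (Ideal.Quotient.mk 𝔪) f) := by
    rw [MvPolynomial.eval_map, ← MvPolynomial.eval₂_id (p := f),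
      MvPolynomial.eval₂_comp_left (Ideal.Quotient.mk 𝔪) (RingHom.id R) lift f]
    rfl
  have hm' : (𝔪 : Ideal R) ∈ ι := hm
  have h3 : (fun i => Ideal.Quotient.mk 𝔪 (lift i)) = x ⟨𝔪, hm'⟩ := by
    funext i
    exact congrFun (hlift i) ⟨𝔪, hm'⟩
  exact hxne ⟨𝔪, hm'⟩ (by rw [← h3, ← h2, h1])
end
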